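/- arXiv:2409.20440 — 2 statements merged into one kernel-verified Lean document; each statement's English description precedes it below -/
import Mathlib

section
/- (Proposition 2, FTPL vs. DOPA.) Let K ≥ 2 and let F_1,…,F_K : ℝ → [0,1] be cumulative distribution functions, each continuous, each strictly increasing at every point s ∈ ℝ (so that 0 < F_k(s) < 1 for all s), and each with finite first moment. Fix u ∈ ℝ^K and let p(u) be the unique maximizer of max_{p ∈ Δ^K} [ Σ_{k=1}^K u_k p_k + Σ_{k=1}^K ∫_{1−p_k}^1 F_k^{-1}(t) dt ]. Then there exists a Borel probability measure Q on ℝ^K that belongs to the marginal ambiguity set B induced by F_1,…,F_K, attains the supremum defining Φ(u;B), and satisfies Q{z ∈ ℝ^K : u_k + z_k > u_ℓ + z_ℓ for all ℓ ≠ k} = p_k(u) for every k ∈ [K]. -/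
/-!
Perturbing the maximiser `p` along `e_l - e_k` and letting the step tend to `0` gives the
first-order conditions of the concave program: every `p k` lies in `(0, 1)` (the quantile of
`F k` blows up at `1`), and `u k + F_k⁻¹ (1 - p k) = c` does not depend on `k`.

Let `Q` be the mixture, with weights `p k`, of the product measures under which `z k` is drawn
from the upper `p k`-tail of `F k` and every other `z l` from the lower `(1 - p l)`-part of `F l`.
Its marginals are the `F l`, and `Q`-almost surely exactly one of the `u k + z k` exceeds `c`,
namely the one of the component `z` was drawn from; this gives `Q {k wins} = p k`. Finally
`⨆ k, u k + z k ≤ c + ∑ k, (u k + z k - c)⁺` for every `z`, with equality `Q`-almost surely, and the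
right-hand side has the same expectation under every coupling of the marginals.
-/

open MeasureTheory Set Filter

noncomputable def simplex (K : ℕ) : Set (Fin K → ℝ) :=
  {p | (∀ k, 0 ≤ p k) ∧ ∑ k, p k = 1}

noncomputable def quantile (F : ℝ → ℝ) (s : ℝ) : ℝ := sInf {t | s ≤ F t}

noncomputable def dopaObj {K : ℕ} (F : Fin K → ℝ → ℝ) (u p : Fin K → ℝ) : ℝ :=
  ∑ k, u k * p k + ∑ k, ∫ t in (1 - p k)..1, quantile (F k) t

def marginalSet {K : ℕ} (F : Fin K → ℝ → ℝ) : Set (Measure (Fin K → ℝ)) :=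
  {Q | IsProbabilityMeasure Q ∧ ∀ k s, Q {z | z k ≤ s} = ENNReal.ofReal (F k s)}

open ProbabilityTheory Topology

structure IsStrictContinuousCDF (F : ℝ → ℝ) : Prop where
  strictMono : StrictMono F
  continuous : Continuous F
  tendsto_atBot : Tendsto F atBot (𝓝 0)
  tendsto_atTop : Tendsto F atTop (𝓝 1)

lemma quantile_eq_of_apply_eq {F : ℝ → ℝ} (hF : StrictMono F) {t x : ℝ} (hx : F x = t) :
    quantile F t = x := by
  have : {y | t ≤ F y} = Ici x := by
    ext y
    simp only [mem_ofPred_eq, mem_Ici, ← hx, hF.le_iff_le]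
  rw [quantile, this, csInf_Ici]

namespace IsStrictContinuousCDF

variable {F : ℝ → ℝ} (hF : IsStrictContinuousCDF F)
include hF

lemma mem_Ioo (s : ℝ) : F s ∈ Ioo 0 1 :=
  ⟨(hF.strictMono.monotone.le_of_tendsto hF.tendsto_atBot (s - 1)).trans_lt
      (hF.strictMono (sub_one_lt s)),
    (hF.strictMono (lt_add_one s)).trans_le
      (hF.strictMono.monotone.ge_of_tendsto hF.tendsto_atTop (s + 1))⟩

lemma exists_apply_eq {t : ℝ} (ht : t ∈ Ioo 0 1) : ∃ x, F x = t := by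
  obtain ⟨a, ha⟩ := (hF.tendsto_atBot.eventually (eventually_lt_nhds ht.1)).exists
  obtain ⟨b, hb⟩ := (hF.tendsto_atTop.eventually (eventually_gt_nhds ht.2)).exists
  obtain ⟨x, -, hx⟩ := intermediate_value_Icc (hF.strictMono.lt_iff_lt.mp (ha.trans hb)).le
    hF.continuous.continuousOn ⟨ha.le, hb.le⟩
  exact ⟨x, hx⟩

lemma quantile_apply (s : ℝ) : quantile F (F s) = s :=
  quantile_eq_of_apply_eq hF.strictMono rfl

lemma apply_quantile {t : ℝ} (ht : t ∈ Ioo 0 1) : F (quantile F t) = t := by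
  obtain ⟨x, rfl⟩ := hF.exists_apply_eq ht
  rw [hF.quantile_apply]

lemma quantile_le_iff {t : ℝ} (ht : t ∈ Ioo 0 1) (s : ℝ) : quantile F t ≤ s ↔ t ≤ F s := by
  obtain ⟨x, rfl⟩ := hF.exists_apply_eq ht
  rw [hF.quantile_apply, hF.strictMono.le_iff_le]

lemma lt_quantile_iff {t : ℝ} (ht : t ∈ Ioo 0 1) (s : ℝ) : s < quantile F t ↔ F s < t := by
  simpa only [not_le] using (hF.quantile_le_iff ht s).not

lemma strictMonoOn_quantile : StrictMonoOn (quantile F) (Ioo 0 1) := by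
  intro s hs t ht hst
  rw [← hF.strictMono.lt_iff_lt, hF.apply_quantile hs, hF.apply_quantile ht]
  exact hst

lemma continuousAt_quantile {t : ℝ} (ht : t ∈ Ioo 0 1) : ContinuousAt (quantile F) t := by
  have himage : quantile F '' Ioo 0 1 = univ :=
    eq_univ_of_forall fun s => ⟨F s, hF.mem_Ioo s, hF.quantile_apply s⟩
  exact hF.strictMonoOn_quantile.continuousAt_of_image_mem_nhds (isOpen_Ioo.mem_nhds ht)
    (himage ▸ univ_mem)

lemma quantile_eq_zero {t : ℝ} (ht : t ∉ Ioo 0 1) : quantile F t = 0 := by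
  rcases le_or_gt t 0 with h0 | h0
  · have : {s | t ≤ F s} = univ := eq_univ_of_forall fun s => h0.trans (hF.mem_Ioo s).1.le
    rw [quantile, this, Real.sInf_univ]
  · have : {s | t ≤ F s} = ∅ := eq_empty_of_forall_notMem fun s hs =>
      ht ⟨h0, hs.trans_lt (hF.mem_Ioo s).2⟩
    rw [quantile, this, Real.sInf_empty]

lemma measurable_quantile : Measurable (quantile F) := by
  have : quantile F = (Ioo 0 1).piecewise (quantile F) 0 := by
    ext t
    by_cases ht : t ∈ Ioo (0 : ℝ) 1
    · simp [ht]
    · simp [ht, hF.quantile_eq_zero ht]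
  rw [this]
  exact ContinuousOn.measurable_piecewise
    (fun t ht => (hF.continuousAt_quantile ht).continuousWithinAt) continuousOn_const
    measurableSet_Ioo

lemma map_quantile_Iic (s : ℝ) :
    (volume.restrict (Ioo 0 1)).map (quantile F) (Iic s) = ENNReal.ofReal (F s) := by
  have : quantile F ⁻¹' Iic s ∩ Ioo 0 1 = Ioc 0 (F s) := by
    ext t
    simp only [mem_inter_iff, mem_preimage, mem_Iic, mem_Ioc]
    constructor
    · rintro ⟨hq, ht⟩
      exact ⟨ht.1, (hF.quantile_le_iff ht s).mp hq⟩
    · rintro ⟨h0, hs⟩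
      have ht : t ∈ Ioo 0 1 := ⟨h0, hs.trans_lt (hF.mem_Ioo s).2⟩
      exact ⟨(hF.quantile_le_iff ht s).mpr hs, ht⟩
  rw [Measure.map_apply hF.measurable_quantile measurableSet_Iic,
    Measure.restrict_apply (hF.measurable_quantile measurableSet_Iic), this, Real.volume_Ioc,
    sub_zero]

end IsStrictContinuousCDF

lemma MeasureTheory.IntegrableOn.intervalIntegrable_of_mem_Icc {f : ℝ → ℝ} {c d a b : ℝ}
    (hf : IntegrableOn f (Ioo c d)) (ha : a ∈ Icc c d) (hb : b ∈ Icc c d) :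
    IntervalIntegrable f volume a b :=
  (((integrableOn_Icc_iff_integrableOn_Ioo).mpr hf).mono_set
    (uIcc_subset_Icc ha hb)).intervalIntegrable

lemma mul_le_intervalIntegral_of_monotoneOn {f : ℝ → ℝ} {a b : ℝ} (hab : a ≤ b)
    (hf : MonotoneOn f (Ico a b)) (hfi : IntervalIntegrable f volume a b) :
    (b - a) * f a ≤ ∫ x in a..b, f x := by
  have := intervalIntegral.integral_mono_on_of_le_Ioo hab intervalIntegrable_const hfi
    fun x hx => hf ⟨le_rfl, hx.1.trans hx.2⟩ ⟨hx.1.le, hx.2⟩ hx.1.le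
  simpa using this

lemma intervalIntegral_le_mul_of_monotoneOn {f : ℝ → ℝ} {a b : ℝ} (hab : a ≤ b)
    (hf : MonotoneOn f (Ioc a b)) (hfi : IntervalIntegrable f volume a b) :
    ∫ x in a..b, f x ≤ (b - a) * f b := by
  have := intervalIntegral.integral_mono_on_of_le_Ioo hab hfi intervalIntegrable_const
    fun x hx => hf ⟨hx.1, hx.2.le⟩ ⟨hx.1.trans hx.2, le_rfl⟩ hx.2.le
  simpa using this

lemma Fintype.sum_update_update_sub {ι : Type*} [Fintype ι] [DecidableEq ι] (g : ι → ℝ → ℝ)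
    (p : ι → ℝ) {k l : ι} (hkl : k ≠ l) (a b : ℝ) :
    ∑ j, g j (Function.update (Function.update p k a) l b j) - ∑ j, g j (p j) =
      (g k a - g k (p k)) + (g l b - g l (p l)) := by
  rw [← Finset.sum_sub_distrib, Fintype.sum_eq_add k l hkl]
  · simp [Function.update_of_ne hkl]
  · rintro j ⟨hjk, hjl⟩
    simp [Function.update_of_ne hjk, Function.update_of_ne hjl]

section Simplex

variable {K : ℕ} {p : Fin K → ℝ}

lemma le_one_of_mem_simplex (hp : p ∈ simplex K) (k : Fin K) : p k ≤ 1 :=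
  hp.2 ▸ Finset.single_le_sum (fun j _ => hp.1 j) (Finset.mem_univ k)

lemma lt_one_of_mem_simplex (hK : 2 ≤ K) (hp : p ∈ simplex K) (hpos : ∀ j, 0 < p j)
    (k : Fin K) : p k < 1 := by
  have : Nontrivial (Fin K) := Fin.nontrivial_iff_two_le.mpr hK
  obtain ⟨j, hj⟩ := exists_ne k
  exact hp.2 ▸ Finset.single_lt_sum hj (Finset.mem_univ k) (Finset.mem_univ j) (hpos j)
    fun i _ _ => (hpos i).le

lemma update_update_mem_simplex (hp : p ∈ simplex K) {k l : Fin K} (hkl : k ≠ l) {ε : ℝ}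
    (hε : 0 ≤ ε) (hεk : ε ≤ p k) :
    Function.update (Function.update p k (p k - ε)) l (p l + ε) ∈ simplex K := by
  refine ⟨fun j => ?_, ?_⟩
  · rcases eq_or_ne j l with rfl | hjl
    · simpa using add_nonneg (hp.1 j) hε
    rcases eq_or_ne j k with rfl | hjk
    · simpa [Function.update_of_ne hjl] using hεk
    · simpa [Function.update_of_ne hjl, Function.update_of_ne hjk] using hp.1 j
  · have := Fintype.sum_update_update_sub (fun _ y => y) p hkl (p k - ε) (p l + ε)
    linarith [hp.2]

end Simplex

section Maximizer

variable {K : ℕ} {F : Fin K → ℝ → ℝ} {u p : Fin K → ℝ}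

lemma dopaObj_eq_sum :
    dopaObj F u p = ∑ j, (u j * p j + ∫ t in (1 - p j)..1, quantile (F j) t) :=
  Finset.sum_add_distrib.symm

variable (hint : ∀ j, IntegrableOn (quantile (F j)) (Ioo 0 1)) (hp : p ∈ simplex K)
  (hmax : IsMaxOn (dopaObj F u) (simplex K) p)
include hint hp hmax

lemma integral_exchange_le {k l : Fin K} (hkl : k ≠ l) {ε : ℝ} (hε : 0 ≤ ε) (hεk : ε ≤ p k)
    (hεl : ε ≤ 1 - p l) :
    u l * ε + ∫ t in (1 - p l - ε)..(1 - p l), quantile (F l) t ≤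
      u k * ε + ∫ t in (1 - p k)..(1 - p k + ε), quantile (F k) t := by
  have hle := hmax (update_update_mem_simplex hp hkl hε hεk)
  have hdiff := Fintype.sum_update_update_sub
    (fun j y => u j * y + ∫ t in (1 - y)..1, quantile (F j) t) p hkl (p k - ε) (p l + ε)
  have hk1 := le_one_of_mem_simplex hp k
  have hl0 := hp.1 l
  have hsplit_k := intervalIntegral.integral_add_adjacent_intervals
    ((hint k).intervalIntegrable_of_mem_Icc (a := 1 - p k) (b := 1 - p k + ε)
      ⟨by linarith, by linarith⟩ ⟨by linarith, by linarith⟩)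
    ((hint k).intervalIntegrable_of_mem_Icc (b := 1)
      ⟨by linarith, by linarith⟩ ⟨by linarith, le_rfl⟩)
  have hsplit_l := intervalIntegral.integral_add_adjacent_intervals
    ((hint l).intervalIntegrable_of_mem_Icc (a := 1 - p l - ε) (b := 1 - p l)
      ⟨by linarith, by linarith⟩ ⟨by linarith, by linarith⟩)
    ((hint l).intervalIntegrable_of_mem_Icc (b := 1)
      ⟨by linarith, by linarith⟩ ⟨by linarith, le_rfl⟩)
  simp only [mem_ofPred_eq, dopaObj_eq_sum] at hle
  rw [show 1 - (p k - ε) = 1 - p k + ε by ring, show 1 - (p l + ε) = 1 - p l - ε by ring] at hdiff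
  linarith

variable (hF : ∀ j, IsStrictContinuousCDF (F j))
include hF

lemma add_quantile_le_of_exchange {k l : Fin K} (hkl : k ≠ l) {ε : ℝ} (hε : 0 < ε)
    (hεk : ε < p k) (hεl : ε < 1 - p l) :
    u l + quantile (F l) (1 - p l - ε) ≤ u k + quantile (F k) (1 - p k + ε) := by
  have hk1 := le_one_of_mem_simplex hp k
  have hl0 := hp.1 l
  have hlower := mul_le_intervalIntegral_of_monotoneOn (by linarith)
    ((hF l).strictMonoOn_quantile.monotoneOn.mono fun t ht =>
      ⟨by linarith [ht.1], by linarith [ht.2]⟩)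
    ((hint l).intervalIntegrable_of_mem_Icc (a := 1 - p l - ε) (b := 1 - p l)
      ⟨by linarith, by linarith⟩ ⟨by linarith, by linarith⟩)
  have hupper := intervalIntegral_le_mul_of_monotoneOn (by linarith)
    ((hF k).strictMonoOn_quantile.monotoneOn.mono fun t ht =>
      ⟨by linarith [ht.1], by linarith [ht.2]⟩)
    ((hint k).intervalIntegrable_of_mem_Icc (a := 1 - p k) (b := 1 - p k + ε)
      ⟨by linarith, by linarith⟩ ⟨by linarith, by linarith⟩)
  have hexchange := integral_exchange_le hint hp hmax hkl hε.le hεk.le hεl.le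
  refine le_of_mul_le_mul_left ?_ hε
  linarith

lemma pos_of_isMaxOn (l : Fin K) : 0 < p l := by
  by_contra! hl
  replace hl : p l = 0 := le_antisymm hl (hp.1 l)
  obtain ⟨k, hk⟩ : ∃ k, 0 < p k := by
    by_contra! h
    linarith [hp.2, Finset.sum_nonpos fun j (_ : j ∈ Finset.univ) => h j]
  have hkl : k ≠ l := by rintro rfl; linarith
  set M := u k + quantile (F k) (1 - p k / 2) - u l
  have hFM := (hF l).mem_Ioo M
  set ε := min (p k / 2) ((1 - F l M) / 2)
  have hε : 0 < ε := lt_min (by linarith) (by linarith [hFM.2])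
  have hεk : ε ≤ p k / 2 := min_le_left _ _
  have hεM : ε ≤ (1 - F l M) / 2 := min_le_right _ _
  have hexchange := add_quantile_le_of_exchange hint hp hmax hF hkl hε (by linarith)
    (by linarith [hFM.1])
  have hmono : quantile (F k) (1 - p k + ε) ≤ quantile (F k) (1 - p k / 2) :=
    (hF k).strictMonoOn_quantile.monotoneOn
      ⟨by linarith [le_one_of_mem_simplex hp k], by linarith⟩
      ⟨by linarith [le_one_of_mem_simplex hp k], by linarith⟩ (by linarith)
  have hlarge : M < quantile (F l) (1 - ε) :=
    ((hF l).lt_quantile_iff ⟨by linarith [hFM.1], by linarith⟩ M).mpr (by linarith)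
  rw [hl, sub_zero] at hexchange
  linarith

lemma add_quantile_le_of_isMaxOn (hp1 : ∀ j, p j < 1) (k l : Fin K) :
    u l + quantile (F l) (1 - p l) ≤ u k + quantile (F k) (1 - p k) := by
  rcases eq_or_ne k l with rfl | hkl
  · exact le_rfl
  have hpos := pos_of_isMaxOn hint hp hmax hF
  have hcont (j : Fin K) : ContinuousAt (quantile (F j)) (1 - p j) :=
    (hF j).continuousAt_quantile ⟨by linarith [hp1 j], by linarith [hpos j]⟩
  have hl : Tendsto (fun ε => u l + quantile (F l) (1 - p l - ε)) (𝓝[>] 0)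
      (𝓝 (u l + quantile (F l) (1 - p l))) :=
    tendsto_nhdsWithin_of_tendsto_nhds <| tendsto_const_nhds.add <|
      (hcont l).tendsto.comp (by simpa using (continuous_sub_left (1 - p l)).tendsto 0)
  have hk : Tendsto (fun ε => u k + quantile (F k) (1 - p k + ε)) (𝓝[>] 0)
      (𝓝 (u k + quantile (F k) (1 - p k))) :=
    tendsto_nhdsWithin_of_tendsto_nhds <| tendsto_const_nhds.add <|
      (hcont k).tendsto.comp (by simpa using (continuous_const_add (1 - p k)).tendsto 0)
  refine le_of_tendsto_of_tendsto hl hk ?_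
  filter_upwards [Ioo_mem_nhdsGT (lt_min (hpos k) (sub_pos.mpr (hp1 l)))] with ε hε
  exact add_quantile_le_of_exchange hint hp hmax hF hkl hε.1
    (hε.2.trans_le (min_le_left _ _)) (hε.2.trans_le (min_le_right _ _))

end Maximizer

section Supremum

variable {ι : Type*}

lemma forall_ne_lt_iff_eq {v : ι → ℝ} {c : ℝ} {j : ι} (hj : c < v j)
    (hl : ∀ l ≠ j, v l ≤ c) (k : ι) : (∀ l ≠ k, v l < v k) ↔ k = j := by
  constructor
  · intro h
    by_contra hkj
    linarith [h j (Ne.symm hkj), hl k hkj]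
  · rintro rfl l hlk
    linarith [hl l hlk]

lemma integrable_max_add_sub {μ : Measure (ι → ℝ)} [IsFiniteMeasure μ] {u : ι → ℝ} {c : ℝ}
    {i : ι} (hμ : Integrable (fun z => z i) μ) :
    Integrable (fun z => max (u i + z i - c) 0) μ :=
  (((integrable_const (u i)).add hμ).sub (integrable_const c)).pos_part

variable [Fintype ι]

def thresholdBound (u : ι → ℝ) (c : ℝ) (z : ι → ℝ) : ℝ := c + ∑ i, max (u i + z i - c) 0

lemma ciSup_le_thresholdBound [Nonempty ι] (u : ι → ℝ) (c : ℝ) (z : ι → ℝ) :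
    ⨆ i, u i + z i ≤ thresholdBound u c z :=
  ciSup_le fun i => by
    rw [thresholdBound]
    have := Finset.single_le_sum (fun j _ => le_max_right (u j + z j - c) 0) (Finset.mem_univ i)
    linarith [le_max_left (u i + z i - c) 0]

lemma ciSup_eq_thresholdBound {u : ι → ℝ} {c : ℝ} {z : ι → ℝ} {k : ι} (hk : c < u k + z k)
    (hl : ∀ l ≠ k, u l + z l ≤ c) : ⨆ i, u i + z i = thresholdBound u c z := by
  have : Nonempty ι := ⟨k⟩
  have hsup : ⨆ i, u i + z i = u k + z k := by
    refine le_antisymm (ciSup_le fun i => ?_)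
      (le_ciSup (f := fun i => u i + z i) (Finite.bddAbove_range _) k)
    rcases eq_or_ne i k with rfl | hik
    · exact le_rfl
    · linarith [hl i hik]
  rw [hsup, thresholdBound,
    Fintype.sum_eq_single k fun l hlk => max_eq_right (by linarith [hl l hlk]),
    max_eq_left (by linarith)]
  ring

variable {μ ν : Measure (ι → ℝ)} {u : ι → ℝ} {c : ℝ}

lemma integrable_thresholdBound [IsFiniteMeasure μ] (hμ : ∀ i, Integrable (fun z => z i) μ) :
    Integrable (thresholdBound u c) μ :=
  (integrable_const c).add <| integrable_finsetSum _ fun i _ => integrable_max_add_sub (hμ i)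

lemma integral_thresholdBound [IsProbabilityMeasure μ] (hμ : ∀ i, Integrable (fun z => z i) μ) :
    ∫ z, thresholdBound u c z ∂μ = c + ∑ i, ∫ z, max (u i + z i - c) 0 ∂μ := by
  simp only [thresholdBound]
  rw [integral_add (integrable_const c)
      (integrable_finsetSum _ fun i _ => integrable_max_add_sub (hμ i)),
    integral_finsetSum _ fun i _ => integrable_max_add_sub (hμ i), integral_const, probReal_univ,
    one_smul]

lemma integral_thresholdBound_eq_of_identDistrib [IsProbabilityMeasure μ]
    [IsProbabilityMeasure ν]
    (hmarg : ∀ i, IdentDistrib (Function.eval i) (Function.eval i) ν μ)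
    (hμ : ∀ i, Integrable (fun z => z i) μ) :
    ∫ z, thresholdBound u c z ∂ν = ∫ z, thresholdBound u c z ∂μ := by
  have hν (i : ι) : Integrable (fun z => z i) ν := (hmarg i).integrable_iff.mpr (hμ i)
  have hφ (i : ι) : Measurable fun t : ℝ => max (u i + t - c) 0 := by fun_prop
  rw [integral_thresholdBound hν, integral_thresholdBound hμ]
  congr 1
  exact Finset.sum_congr rfl fun i _ => ((hmarg i).comp (hφ i)).integral_eq

lemma integrable_iSup_of_ae [IsFiniteMeasure μ] (hμ : ∀ i, Integrable (fun z => z i) μ)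
    (hae : ∀ᵐ z ∂μ, ∃ k, c < u k + z k ∧ ∀ l ≠ k, u l + z l ≤ c) :
    Integrable (fun z => ⨆ i, u i + z i) μ :=
  (integrable_thresholdBound hμ).congr <|
    hae.mono fun _ ⟨_, hk, hl⟩ => (ciSup_eq_thresholdBound hk hl).symm

theorem integral_iSup_le_of_identDistrib [Nonempty ι] [IsProbabilityMeasure μ]
    [IsProbabilityMeasure ν]
    (hmarg : ∀ i, IdentDistrib (Function.eval i) (Function.eval i) ν μ)
    (hμ : ∀ i, Integrable (fun z => z i) μ)
    (hae : ∀ᵐ z ∂μ, ∃ k, c < u k + z k ∧ ∀ l ≠ k, u l + z l ≤ c)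
    (hν : Integrable (fun z => ⨆ i, u i + z i) ν) :
    ∫ z, ⨆ i, u i + z i ∂ν ≤ ∫ z, ⨆ i, u i + z i ∂μ := calc
  _ ≤ ∫ z, thresholdBound u c z ∂ν :=
    integral_mono hν (integrable_thresholdBound fun i => (hmarg i).integrable_iff.mpr (hμ i))
      (ciSup_le_thresholdBound u c)
  _ = ∫ z, thresholdBound u c z ∂μ := integral_thresholdBound_eq_of_identDistrib hmarg hμ
  _ = ∫ z, ⨆ i, u i + z i ∂μ :=
    integral_congr_ae <| hae.mono fun _ ⟨_, hk, hl⟩ => (ciSup_eq_thresholdBound hk hl).symm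

end Supremum

lemma ProbabilityTheory.smul_cond_eq_restrict {α : Type*} [MeasurableSpace α] {μ : Measure α}
    {s : Set α} (h0 : μ s ≠ 0) (htop : μ s ≠ ⊤) : μ s • μ[|s] = μ.restrict s := by
  rw [cond, smul_smul, ENNReal.mul_inv_cancel h0 htop, one_smul]

lemma identDistrib_eval_of_mem_marginalSet {K : ℕ} {F : Fin K → ℝ → ℝ}
    {μ ν : Measure (Fin K → ℝ)} (hμ : μ ∈ marginalSet F) (hν : ν ∈ marginalSet F) (k : Fin K) :
    IdentDistrib (Function.eval k) (Function.eval k) ν μ where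
  aemeasurable_fst := (measurable_pi_apply k).aemeasurable
  aemeasurable_snd := (measurable_pi_apply k).aemeasurable
  map_eq := by
    have := hμ.1
    have := hν.1
    refine Measure.ext_of_Iic _ _ fun s => ?_
    rw [Measure.map_apply (measurable_pi_apply k) measurableSet_Iic,
      Measure.map_apply (measurable_pi_apply k) measurableSet_Iic]
    exact (hν.2 k s).trans (hμ.2 k s).symm

section Coupling

variable {K : ℕ} {F : Fin K → ℝ → ℝ} {u p : Fin K → ℝ} {c : ℝ}

def couplingBand (p : Fin K → ℝ) (k l : Fin K) : Set ℝ :=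
  if l = k then Ioo (1 - p l) 1 else Ioc 0 (1 - p l)

noncomputable def couplingComponent (F : Fin K → ℝ → ℝ) (p : Fin K → ℝ) (k : Fin K) :
    Measure (Fin K → ℝ) :=
  Measure.pi fun l => (volume[|couplingBand p k l]).map (quantile (F l))

noncomputable def coupling (F : Fin K → ℝ → ℝ) (p : Fin K → ℝ) : Measure (Fin K → ℝ) :=
  ∑ k, ENNReal.ofReal (p k) • couplingComponent F p k

lemma measurableSet_couplingBand (k l : Fin K) : MeasurableSet (couplingBand p k l) := by
  unfold couplingBand
  split_ifs
  exacts [measurableSet_Ioo, measurableSet_Ioc]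

lemma ae_coupling_of_forall {P : (Fin K → ℝ) → Prop}
    (h : ∀ k, ∀ᵐ z ∂couplingComponent F p k, P z) : ∀ᵐ z ∂coupling F p, P z := by
  rw [coupling, ← Measure.sum_fintype, Measure.ae_sum_iff]
  exact fun k => Measure.ae_smul_measure (h k) _

variable (hp01 : ∀ l, p l ∈ Ioo 0 1)
include hp01

lemma isProbabilityMeasure_cond_couplingBand (k l : Fin K) :
    IsProbabilityMeasure (volume[|couplingBand p k l]) := by
  have := hp01 l
  apply cond_isProbabilityMeasure_of_finite
  all_goals
    unfold couplingBand
    split_ifs <;> simp [Real.volume_Ioo, Real.volume_Ioc, this.1, this.2]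

lemma sum_smul_cond_couplingBand (hp : p ∈ simplex K) (l : Fin K) :
    ∑ k, ENNReal.ofReal (p k) • volume[|couplingBand p k l] = volume.restrict (Ioo 0 1) := by
  have hl := hp01 l
  have hrest : ∑ k ∈ Finset.univ.erase l, ENNReal.ofReal (p k) = ENNReal.ofReal (1 - p l) := by
    rw [← ENNReal.ofReal_sum_of_nonneg fun k _ => hp.1 k,
      Finset.sum_erase_eq_sub (Finset.mem_univ l), hp.2]
  rw [← Finset.add_sum_erase _ _ (Finset.mem_univ l),
    Finset.sum_congr rfl fun k hk => by rw [couplingBand, if_neg (Finset.ne_of_mem_erase hk).symm],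
    ← Finset.sum_smul, hrest, couplingBand, if_pos rfl]
  have htop := smul_cond_eq_restrict (μ := volume) (s := Ioo (1 - p l) 1)
  have hbot := smul_cond_eq_restrict (μ := volume) (s := Ioc 0 (1 - p l))
  simp only [Real.volume_Ioo, Real.volume_Ioc, sub_sub_cancel, sub_zero, ne_eq,
    ENNReal.ofReal_eq_zero, not_le, ENNReal.ofReal_ne_top, not_false_eq_true, forall_const,
    hl.1, sub_pos.mpr hl.2] at htop hbot
  have hdisj : Disjoint (Ioc 0 (1 - p l)) (Ioo (1 - p l) 1) :=
    Set.disjoint_left.mpr fun t h1 h2 => lt_irrefl t (h1.2.trans_lt h2.1)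
  rw [htop, hbot, add_comm, ← Measure.restrict_union hdisj measurableSet_Ioo,
    Ioc_union_Ioo_eq_Ioo (by linarith [hl.2]) (by linarith [hl.1])]

variable (hF : ∀ l, IsStrictContinuousCDF (F l))
include hF

lemma isProbabilityMeasure_map_cond_couplingBand (k l : Fin K) :
    IsProbabilityMeasure ((volume[|couplingBand p k l]).map (quantile (F l))) :=
  have := isProbabilityMeasure_cond_couplingBand hp01 k l
  Measure.isProbabilityMeasure_map (hF l).measurable_quantile.aemeasurable

lemma isProbabilityMeasure_couplingComponent (k : Fin K) :
    IsProbabilityMeasure (couplingComponent F p k) := by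
  have := isProbabilityMeasure_map_cond_couplingBand hp01 hF k
  unfold couplingComponent
  infer_instance

lemma isProbabilityMeasure_coupling (hp : p ∈ simplex K) : IsProbabilityMeasure (coupling F p) := by
  have := isProbabilityMeasure_couplingComponent hp01 hF
  constructor
  simp only [coupling, Measure.coe_finsetSum, Finset.sum_apply, Measure.smul_apply, measure_univ,
    smul_eq_mul, mul_one]
  rw [← ENNReal.ofReal_sum_of_nonneg fun k _ => hp.1 k, hp.2, ENNReal.ofReal_one]

lemma identDistrib_eval_coupling (hp : p ∈ simplex K) (l : Fin K) :
    IdentDistrib (Function.eval l) (quantile (F l)) (coupling F p) (volume.restrict (Ioo 0 1)) where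
  aemeasurable_fst := (measurable_pi_apply l).aemeasurable
  aemeasurable_snd := (hF l).measurable_quantile.aemeasurable
  map_eq := by
    have (k : Fin K) := isProbabilityMeasure_map_cond_couplingBand hp01 hF k
    rw [coupling, Measure.map_finset_sum' (measurable_pi_apply l).aemeasurable,
      ← sum_smul_cond_couplingBand hp01 hp l,
      Measure.map_finset_sum' (hF l).measurable_quantile.aemeasurable]
    refine Finset.sum_congr rfl fun k _ => ?_
    rw [Measure.map_smul, Measure.map_smul, couplingComponent, (measurePreserving_eval _ l).map_eq]

lemma coupling_mem_marginalSet (hp : p ∈ simplex K) : coupling F p ∈ marginalSet F := by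
  refine ⟨isProbabilityMeasure_coupling hp01 hF hp, fun l s => ?_⟩
  rw [← (hF l).map_quantile_Iic, ← (identDistrib_eval_coupling hp01 hF hp l).map_eq,
    Measure.map_apply (measurable_pi_apply l) measurableSet_Iic]
  rfl

lemma integrable_eval_coupling (hint : ∀ l, IntegrableOn (quantile (F l)) (Ioo 0 1))
    (hp : p ∈ simplex K) (l : Fin K) : Integrable (fun z => z l) (coupling F p) :=
  (identDistrib_eval_coupling hp01 hF hp l).integrable_iff.mpr (hint l)

lemma ae_couplingComponent (k : Fin K) :
    ∀ᵐ z ∂couplingComponent F p k, quantile (F k) (1 - p k) < z k ∧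
      ∀ l ≠ k, z l ≤ quantile (F l) (1 - p l) := by
  set J : Fin K → Set ℝ := fun l =>
    if l = k then Ioi (quantile (F l) (1 - p l)) else Iic (quantile (F l) (1 - p l))
  have hJ (l : Fin K) : ∀ᵐ z ∂couplingComponent F p k, z l ∈ J l := by
    refine Measure.tendsto_eval_ae_ae.eventually ?_
    have hJmeas : MeasurableSet (J l) := by
      simp only [J]
      split_ifs
      exacts [measurableSet_Ioi, measurableSet_Iic]
    rw [ae_map_iff (p := (· ∈ J l)) (hF l).measurable_quantile.aemeasurable hJmeas]
    refine (ae_cond_mem (measurableSet_couplingBand k l)).mono fun t ht => ?_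
    have hl := hp01 l
    have hc : 1 - p l ∈ Ioo 0 1 := ⟨by linarith [hl.2], by linarith [hl.1]⟩
    simp only [J, couplingBand] at ht ⊢
    split_ifs at ht ⊢
    · exact (hF l).strictMonoOn_quantile hc ⟨hc.1.trans ht.1, ht.2⟩ ht.1
    · exact (hF l).strictMonoOn_quantile.monotoneOn ⟨ht.1, ht.2.trans_lt hc.2⟩ hc ht.2
  filter_upwards [ae_all_iff.mpr hJ] with z hz
  exact ⟨by simpa [J] using hz k, fun l hl => by simpa [J, hl] using hz l⟩

variable (hc : ∀ l, u l + quantile (F l) (1 - p l) = c)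
include hc

lemma ae_couplingComponent_threshold (k : Fin K) :
    ∀ᵐ z ∂couplingComponent F p k, c < u k + z k ∧ ∀ l ≠ k, u l + z l ≤ c :=
  (ae_couplingComponent hp01 hF k).mono fun _ ⟨hk, hl⟩ =>
    ⟨by linarith [hc k], fun l hlk => by linarith [hc l, hl l hlk]⟩

lemma ae_coupling_threshold :
    ∀ᵐ z ∂coupling F p, ∃ k, c < u k + z k ∧ ∀ l ≠ k, u l + z l ≤ c :=
  ae_coupling_of_forall fun k =>
    (ae_couplingComponent_threshold hp01 hF hc k).mono fun _ hz => ⟨k, hz⟩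

lemma coupling_apply_forall_ne_lt (k : Fin K) :
    coupling F p {z | ∀ l ≠ k, u l + z l < u k + z k} = ENNReal.ofReal (p k) := by
  have hcomp (j : Fin K) :
      couplingComponent F p j {z | ∀ l ≠ k, u l + z l < u k + z k} = if j = k then 1 else 0 := by
    have := isProbabilityMeasure_couplingComponent hp01 hF j
    have hae : {z | ∀ l ≠ k, u l + z l < u k + z k} =ᵐ[couplingComponent F p j] {_z | k = j} :=
      eventuallyEq_set.mpr <| (ae_couplingComponent_threshold hp01 hF hc j).mono
        fun z ⟨hj, hl⟩ => forall_ne_lt_iff_eq (v := fun i => u i + z i) hj hl k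
    rw [measure_congr hae]
    rcases eq_or_ne j k with rfl | hjk
    · simp
    · simp [hjk, hjk.symm]
  simp [coupling, hcomp]

end Coupling

theorem stmt5_general (K : ℕ) (hK : 2 ≤ K) (F : Fin K → ℝ → ℝ)
    (hmono : ∀ k, StrictMono (F k))
    (hcont : ∀ k, Continuous (F k))
    (hbot : ∀ k, Tendsto (F k) atBot (nhds 0))
    (htop : ∀ k, Tendsto (F k) atTop (nhds 1))
    (hint : ∀ k, IntegrableOn (quantile (F k)) (Ioo (0:ℝ) 1))
    (u p : Fin K → ℝ) (hp : p ∈ simplex K)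
    (hmax : IsMaxOn (dopaObj F u) (simplex K) p) :
    ∃ Q : Measure (Fin K → ℝ), Q ∈ marginalSet F ∧
      Integrable (fun z => ⨆ k, u k + z k) Q ∧
      (∀ Q' ∈ marginalSet F, Integrable (fun z => ⨆ k, u k + z k) Q' →
        ∫ z, (⨆ k, u k + z k) ∂Q' ≤ ∫ z, (⨆ k, u k + z k) ∂Q) ∧
      ∀ k, Q {z | ∀ l, l ≠ k → u l + z l < u k + z k} = ENNReal.ofReal (p k) := by
  have hF (k : Fin K) : IsStrictContinuousCDF (F k) := ⟨hmono k, hcont k, hbot k, htop k⟩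
  have hpos := pos_of_isMaxOn hint hp hmax hF
  have hp01 (k : Fin K) : p k ∈ Ioo 0 1 := ⟨hpos k, lt_one_of_mem_simplex hK hp hpos k⟩
  let k₀ : Fin K := ⟨0, by omega⟩
  have hc (l : Fin K) : u l + quantile (F l) (1 - p l) = u k₀ + quantile (F k₀) (1 - p k₀) :=
    le_antisymm (add_quantile_le_of_isMaxOn hint hp hmax hF (fun k => (hp01 k).2) k₀ l)
      (add_quantile_le_of_isMaxOn hint hp hmax hF (fun k => (hp01 k).2) l k₀)
  have hQ := coupling_mem_marginalSet hp01 hF hp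
  have := hQ.1
  have : Nonempty (Fin K) := ⟨k₀⟩
  have hcoord := integrable_eval_coupling hp01 hF hint hp
  have hae := ae_coupling_threshold hp01 hF hc
  refine ⟨coupling F p, hQ, integrable_iSup_of_ae hcoord hae, fun Q' hQ' hQ'int => ?_,
    coupling_apply_forall_ne_lt hp01 hF hc⟩
  have := hQ'.1
  exact integral_iSup_le_of_identDistrib (identDistrib_eval_of_mem_marginalSet hQ hQ') hcoord hae
    hQ'int

theorem stmt5 (K : ℕ) (hK : 2 ≤ K) (F : Fin K → ℝ → ℝ)
    (hmono : ∀ k, StrictMono (F k))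
    (hcont : ∀ k, Continuous (F k))
    (h01 : ∀ k s, F k s ∈ Ioo (0:ℝ) 1)
    (hbot : ∀ k, Tendsto (F k) atBot (nhds 0))
    (htop : ∀ k, Tendsto (F k) atTop (nhds 1))
    (hint : ∀ k, IntegrableOn (quantile (F k)) (Ioo (0:ℝ) 1))
    (u p : Fin K → ℝ) (hp : p ∈ simplex K)
    (hmax : IsMaxOn (dopaObj F u) (simplex K) p)
    (huniq : ∀ q ∈ simplex K, IsMaxOn (dopaObj F u) (simplex K) q → q = p) :
    ∃ Q : Measure (Fin K → ℝ), Q ∈ marginalSet F ∧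
      Integrable (fun z => ⨆ k, u k + z k) Q ∧
      (∀ Q' ∈ marginalSet F, Integrable (fun z => ⨆ k, u k + z k) Q' →
        ∫ z, (⨆ k, u k + z k) ∂Q' ≤ ∫ z, (⨆ k, u k + z k) ∂Q) ∧
      ∀ k, Q {z | ∀ l, l ≠ k → u l + z l < u k + z k} = ENNReal.ofReal (p k) :=
  stmt5_general K hK F hmono hcont hbot htop hint u p hp hmax
end

section
/- (Theorem 2, regret analysis of DOPA.) Let K ≥ 1 and let F_1,…,F_K : ℝ → [0,1] be cumulative distribution functions, each differentiable, strictly increasing at every s with F_k(s) ∈ (0,1), satisfying F_k(s) < 1 for all s ∈ ℝ, having finite first moment with ∫_0^1 F_k^{-1}(t) dt = 0 (equivalently, ∫_ℝ s F_k'(s) ds = 0). Suppose there exist γ ∈ (1,2) and B > 0 such that F_k'(F_k^{-1}(1−p)) ≤ B p^γ for all p ∈ (0,1) and all k ∈ [K]. For u ∈ ℝ^K let p(u) ∈ Δ^K be the unique maximizer of max_{p ∈ Δ^K} [ Σ_{k=1}^K u_k p_k + Σ_{k=1}^K ∫_{1−p_k}^1 F_k^{-1}(t) dt ] (which is componentwise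 strictly positive). Then for every horizon T ≥ 1 and every deterministic non-oblivious adversary, the regret of the learner in the bandit protocol run with the arm-sampling map p(·) satisfies R(T) ≤ Σ_{k=1}^K ∫_{1−p_k(0)}^1 F_k^{-1}(t) dt + (1/2)·B·T·K^{2−γ}, where p(0) is the maximizer at u = 0. -/
open Set Filter MeasureTheory

/- Histories of chosen arms are recorded as lists in reverse chronological order:
the head of the list is the most recently chosen arm.  A deterministic non-oblivious
adversary is a function `r : List (Fin K) → Fin K → ℝ` assigning a reward vector
to each history of previously chosen arms. -/

/-- Cumulative importance-weighted reward estimate `û` after the history `h`,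
for the learner using the arm-sampling map `p`. -/
noncomputable def uhat {K : ℕ} (r : List (Fin K) → Fin K → ℝ)
    (p : (Fin K → ℝ) → (Fin K → ℝ)) : List (Fin K) → Fin K → ℝ
  | [] => fun _ => 0
  | a :: h => fun k =>
      uhat r p h k + (if k = a then r h a / p (uhat r p h) a else 0)

/-- Probability that the learner using the arm-sampling map `p` produces the
history `h`. -/
noncomputable def histProb {K : ℕ} (r : List (Fin K) → Fin K → ℝ)
    (p : (Fin K → ℝ) → (Fin K → ℝ)) : List (Fin K) → ℝ
  | [] => 1
  | a :: h => histProb r p h * p (uhat r p h) a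

/-- Total reward collected by the learner along the history `h`. -/
noncomputable def cumReward {K : ℕ} (r : List (Fin K) → Fin K → ℝ) :
    List (Fin K) → ℝ
  | [] => 0
  | a :: h => cumReward r h + r h a

/-- Total reward that arm `k` would have collected along the history `h`. -/
noncomputable def cumArm {K : ℕ} (r : List (Fin K) → Fin K → ℝ) (k : Fin K) :
    List (Fin K) → ℝ
  | [] => 0
  | _ :: h => cumArm r k h + r h k

/-- The regret `R(T) = max_k E[∑_t r_{t,k}] − E[∑_t r_{t,a_t}]`, where the
expectation is the sum over all arm sequences of length `T` weighted by their
probabilities under the learner's process. -/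
noncomputable def regret (K T : ℕ) (r : List (Fin K) → Fin K → ℝ)
    (p : (Fin K → ℝ) → (Fin K → ℝ)) : ℝ :=
  (⨆ k : Fin K, ∑ f : Fin T → Fin K,
      histProb r p (List.ofFn f).reverse * cumArm r k (List.ofFn f).reverse) -
    ∑ f : Fin T → Fin K,
      histProb r p (List.ofFn f).reverse * cumReward r (List.ofFn f).reverse

/-!
DOPA is follow-the-regularized-leader with the concave regularizer
`ψ(p) = ∑ₖ ∫_{1 - pₖ}^1 Fₖ⁻¹`, and its value `Φ(u) = max_p (⟨u, p⟩ + ψ(p))` is the potential.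
Since `∫₀¹ Fₖ⁻¹ = 0` gives `Φ(u) ≥ uₖ` (take `p = eₖ`) and the importance-weighted estimate `û`
is unbiased, the regret is at most `E[Φ(û_T)] - E[∑ₜ r_{t,aₜ}]`. In one round `Φ` grows in
expectation by at most the learner's reward plus `½ B ∑ₐ pₐ^{γ-1} ≤ ½ B K^{2-γ}`: along the path
`u + s c eₖ` (`c ≤ 0`) the maximizer's `k`-th coordinate drops at rate at most `B pₖ^γ`, because
the first-order conditions `uₘ + Fₘ⁻¹(1 - pₘ) = λ` tie `pₖ` to `Fₖ`, whose density near its upper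
tail is controlled by the growth condition; integrating along the path gives
`Φ(u + c eₖ) ≤ Φ(u) + c pₖ + ½ B c² pₖ^γ`, and `c = r_{t,a}/pₐ` gives the claim.
-/

open Topology

section Quantile

variable {F : ℝ → ℝ}

lemma nonempty_setOf_le_apply (htop : Tendsto F atTop (𝓝 1)) {s : ℝ} (hs : s < 1) :
    {t | s ≤ F t}.Nonempty :=
  (htop.eventually (lt_mem_nhds hs)).exists.imp fun _ => le_of_lt

lemma bddBelow_setOf_le_apply (hmono : Monotone F) (hbot : Tendsto F atBot (𝓝 0)) {s : ℝ}
    (hs : 0 < s) : BddBelow {t | s ≤ F t} := by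
  obtain ⟨t₀, ht₀⟩ := (hbot.eventually (gt_mem_nhds hs)).exists
  exact ⟨t₀, fun t ht => le_of_not_gt fun htt₀ => (ht.trans (hmono htt₀.le)).not_gt ht₀⟩

lemma apply_quantile (hmono : Monotone F) (hcont : Continuous F)
    (hbot : Tendsto F atBot (𝓝 0)) (htop : Tendsto F atTop (𝓝 1)) {s : ℝ} (hs : s ∈ Ioo 0 1) :
    F (quantile F s) = s := by
  have hbdd := bddBelow_setOf_le_apply hmono hbot hs.1
  refine le_antisymm ?_
    ((isClosed_le continuous_const hcont).csInf_mem (nonempty_setOf_le_apply htop hs.2) hbdd)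
  by_contra! hlt
  obtain ⟨t, hst, htq⟩ := (((hcont.continuousAt.eventually (lt_mem_nhds hlt)).filter_mono
    nhdsWithin_le_nhds).and (self_mem_nhdsWithin (s := Iio (quantile F s)))).exists
  exact (csInf_le hbdd hst.le).not_gt htq

lemma quantile_apply (hmono : Monotone F) (hbot : Tendsto F atBot (𝓝 0))
    (hstrict : StrictMonoOn F {s | F s ∈ Ioo 0 1}) {t : ℝ} (ht : F t ∈ Ioo 0 1) :
    quantile F (F t) = t := by
  have hbdd := bddBelow_setOf_le_apply hmono hbot ht.1
  refine (csInf_le hbdd (le_refl (F t))).antisymm (le_of_not_gt fun hlt => ?_)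
  obtain ⟨t', hFt', ht't⟩ := exists_lt_of_csInf_lt ⟨t, le_refl (F t)⟩ hlt
  have heq : F t' = F t := (hmono ht't.le).antisymm hFt'
  exact (hstrict (show F t' ∈ Ioo 0 1 from heq ▸ ht) ht ht't).ne heq

lemma monotoneOn_quantile (hmono : Monotone F) (hbot : Tendsto F atBot (𝓝 0))
    (htop : Tendsto F atTop (𝓝 1)) : MonotoneOn (quantile F) (Ioo 0 1) :=
  fun _ hs _ hs' hss' => csInf_le_csInf (bddBelow_setOf_le_apply hmono hbot hs.1)
    (nonempty_setOf_le_apply htop hs'.2) fun _ ht => hss'.trans ht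

/-- The quantile maps `Ioo 0 1` onto the open set `F ⁻¹' Ioo 0 1`, and a monotone map onto a
neighbourhood is continuous. -/
lemma continuousOn_quantile (hmono : Monotone F) (hcont : Continuous F)
    (hbot : Tendsto F atBot (𝓝 0)) (htop : Tendsto F atTop (𝓝 1))
    (hstrict : StrictMonoOn F {s | F s ∈ Ioo 0 1}) : ContinuousOn (quantile F) (Ioo 0 1) := by
  intro s hs
  refine (continuousAt_of_monotoneOn_of_image_mem_nhds (monotoneOn_quantile hmono hbot htop)
    (isOpen_Ioo.mem_nhds hs) ?_).continuousWithinAt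
  refine mem_of_superset ((isOpen_Ioo (a := (0:ℝ)) (b := 1)).preimage hcont |>.mem_nhds ?_)
    fun t ht => ?_
  · rwa [mem_preimage, apply_quantile hmono hcont hbot htop hs]
  · exact ⟨F t, ht, quantile_apply hmono hbot hstrict ht⟩

lemma le_mul_one_sub_rpow_of_quantile {F' : ℝ → ℝ} {B γ : ℝ} (hmono : Monotone F)
    (hbot : Tendsto F atBot (𝓝 0)) (hstrict : StrictMonoOn F {s | F s ∈ Ioo 0 1})
    (hgrowth : ∀ q ∈ Ioo (0 : ℝ) 1, F' (quantile F (1 - q)) ≤ B * q ^ γ) {s : ℝ}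
    (hs : F s ∈ Ioo 0 1) : F' s ≤ B * (1 - F s) ^ γ := by
  have := hgrowth (1 - F s) ⟨by linarith [hs.2], by linarith [hs.1]⟩
  rwa [sub_sub_cancel, quantile_apply hmono hbot hstrict hs] at this

end Quantile

lemma sub_mul_le_integral_of_monotoneOn {g : ℝ → ℝ} {x y : ℝ} (hg : MonotoneOn g (uIcc x y)) :
    (y - x) * g x ≤ ∫ t in x..y, g t := by
  have hx : x ∈ uIcc x y := left_mem_uIcc
  rcases le_total x y with hxy | hyx
  · calc (y - x) * g x = ∫ _ in x..y, g x := by simp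
      _ ≤ ∫ t in x..y, g t :=
        intervalIntegral.integral_mono_on hxy intervalIntegrable_const hg.intervalIntegrable
          fun t ht => hg hx (Icc_subset_uIcc ht) ht.1
  · have hg' : MonotoneOn g (uIcc y x) := uIcc_comm x y ▸ hg
    have : ∫ t in y..x, g t ≤ ∫ _ in y..x, g x :=
      intervalIntegral.integral_mono_on hyx hg'.intervalIntegrable intervalIntegrable_const
        fun t ht => hg (Icc_subset_uIcc' ht) hx ht.2
    rw [intervalIntegral.integral_symm]
    simp only [intervalIntegral.integral_const, smul_eq_mul] at this
    linarith

lemma sub_mul_le_integral_sub_integral {g : ℝ → ℝ} (hmono : MonotoneOn g (Ioo 0 1))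
    (hint : IntegrableOn g (Ioo 0 1)) {x y : ℝ} (hx : x ∈ Ioo 0 1) (hy : y ∈ Ioo 0 1) :
    (y - x) * g x ≤ (∫ t in x..1, g t) - ∫ t in y..1, g t := by
  have hII : ∀ a ∈ Icc (0 : ℝ) 1, ∀ b ∈ Icc (0 : ℝ) 1, IntervalIntegrable g volume a b :=
    fun a ha b hb => ((integrableOn_Icc_iff_integrableOn_Ioo).2 hint |>.mono_set
      (uIcc_subset_Icc ha hb)).intervalIntegrable
  have hx' := Ioo_subset_Icc_self hx
  have hy' := Ioo_subset_Icc_self hy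
  rw [← intervalIntegral.integral_add_adjacent_intervals (hII x hx' y hy')
    (hII y hy' 1 (right_mem_Icc.2 zero_le_one)), add_sub_cancel_right]
  exact sub_mul_le_integral_of_monotoneOn (hmono.mono (ordConnected_Ioo.uIcc_subset hx hy))

/-- Telescoping over the partition `i / n` bounds `χ 1 - χ 0` by `C / n` for every `n`. -/
lemma le_of_forall_sub_le_mul_sq {χ : ℝ → ℝ} {C : ℝ}
    (h : ∀ s s', 0 ≤ s → s ≤ s' → s' ≤ 1 → χ s' - χ s ≤ C * (s' - s) ^ 2) : χ 1 ≤ χ 0 := by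
  have hn : ∀ n : ℕ, 1 ≤ n → χ 1 - χ 0 ≤ C / n := fun n hn => by
    have hn' : (0 : ℝ) < n := by exact_mod_cast hn
    have hstep : ∀ i ∈ Finset.range n, χ ((i + 1 : ℕ) / n) - χ (i / n) ≤ C / n ^ 2 := by
      intro i hi
      have hi' : (i : ℝ) + 1 ≤ n := by exact_mod_cast Finset.mem_range.1 hi
      convert h (i / n) ((i + 1 : ℕ) / n) (by positivity) (by gcongr; simp)
        ((div_le_one hn').2 (by exact_mod_cast hi')) using 1
      field_simp
      push_cast
      ring
    calc χ 1 - χ 0 = ∑ i ∈ Finset.range n, (χ ((i + 1 : ℕ) / n) - χ (i / n)) := by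
          rw [Finset.sum_range_sub (fun i : ℕ => χ (i / n)), div_self hn'.ne', Nat.cast_zero,
            zero_div]
      _ ≤ ∑ _i ∈ Finset.range n, C / n ^ 2 := Finset.sum_le_sum hstep
      _ = C / n := by rw [Finset.sum_const, Finset.card_range, nsmul_eq_mul]; field_simp
  have := ge_of_tendsto (tendsto_const_div_atTop_nhds_zero_nat C)
    ((eventually_ge_atTop 1).mono hn)
  linarith

lemma sub_le_of_forall_sub_le_mul {φ : ℝ → ℝ} {A L : ℝ}
    (h : ∀ s s', 0 ≤ s → s ≤ s' → s' ≤ 1 → φ s' - φ s ≤ (s' - s) * (A + L * s')) :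
    φ 1 - φ 0 ≤ A + L / 2 := by
  have := le_of_forall_sub_le_mul_sq (χ := fun s => φ s - A * s - L / 2 * s ^ 2) (C := L / 2)
    fun s s' hs hss' hs' => by nlinarith [h s s' hs hss' hs']
  linarith

lemma sum_rpow_le_card_rpow {ι : Type*} [Fintype ι] {P : ι → ℝ} (hP0 : ∀ i, 0 ≤ P i)
    (hP1 : ∑ i, P i = 1) {α : ℝ} (hα0 : 0 ≤ α) (hα1 : α ≤ 1) :
    ∑ i, P i ^ α ≤ (Fintype.card ι : ℝ) ^ (1 - α) := by
  have hn : (0 : ℝ) < Fintype.card ι := by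
    have : Nonempty ι := by
      by_contra h
      simp [not_nonempty_iff.1 h] at hP1
    exact_mod_cast Fintype.card_pos
  have hw : ∑ _i : ι, (Fintype.card ι : ℝ)⁻¹ = 1 := by simp [hn.ne']
  have hJ := (Real.concaveOn_rpow hα0 hα1).le_map_sum (t := Finset.univ)
    (fun _ _ => inv_nonneg.2 hn.le) hw fun i _ => hP0 i
  simp only [smul_eq_mul, ← Finset.mul_sum, hP1, mul_one] at hJ
  calc ∑ i, P i ^ α = Fintype.card ι * ((Fintype.card ι : ℝ)⁻¹ * ∑ i, P i ^ α) := by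
        field_simp
    _ ≤ Fintype.card ι * (Fintype.card ι : ℝ)⁻¹ ^ α := by gcongr
    _ = (Fintype.card ι : ℝ) ^ (1 - α) := by
        rw [Real.inv_rpow hn.le, Real.rpow_sub hn, Real.rpow_one, div_eq_mul_inv]

lemma apply_add_sub_apply_le {F F' : ℝ → ℝ} {B γ : ℝ} (hmono : Monotone F)
    (hderiv : ∀ s, HasDerivAt F (F' s) s) (hlt : ∀ s, F s < 1)
    (hF' : ∀ s, F s ∈ Ioo 0 1 → F' s ≤ B * (1 - F s) ^ γ) (hB : 0 ≤ B) (hγ : 0 ≤ γ)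
    {x ε : ℝ} (hx : 0 < F x) (hε : 0 ≤ ε) :
    F (x + ε) - F x ≤ ε * B * (1 - F x) ^ γ := by
  rcases hε.eq_or_lt with rfl | hε
  · simp
  obtain ⟨ξ, hξ, hslope⟩ := exists_hasDerivAt_eq_slope F F' (lt_add_of_pos_right x hε)
    (Differentiable.continuous fun s => (hderiv s).differentiableAt).continuousOn
    fun s _ => hderiv s
  have hFξ : F x ≤ F ξ := hmono hξ.1.le
  have hξ' : F' ξ ≤ B * (1 - F x) ^ γ :=
    (hF' ξ ⟨hx.trans_le hFξ, hlt ξ⟩).trans <| by gcongr; linarith [hlt ξ]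
  rw [add_sub_cancel_left, eq_div_iff hε.ne'] at hslope
  rw [← hslope, mul_assoc, mul_comm ε]
  exact mul_le_mul_of_nonneg_right hξ' hε.le

section Dopa

variable {K : ℕ} {F : Fin K → ℝ → ℝ}

lemma apply_lt_one_of_mem_simplex {P : Fin K → ℝ} (hP : P ∈ simplex K) {j k : Fin K}
    (hj : 0 < P j) (hkj : k ≠ j) : P k < 1 := by
  have := Finset.sum_le_sum_of_subset_of_nonneg (Finset.subset_univ {k, j}) fun m _ _ => hP.1 m
  rw [Finset.sum_pair hkj, hP.2] at this
  linarith

lemma add_single_sub_single_mem_simplex {P : Fin K → ℝ} (hP : P ∈ simplex K) (k j : Fin K)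
    {ε : ℝ} (hε : 0 ≤ ε) (hεj : ε ≤ P j) : P + Pi.single k ε - Pi.single j ε ∈ simplex K := by
  refine ⟨fun m => ?_, ?_⟩
  · simp only [Pi.sub_apply, Pi.add_apply, Pi.single_apply]
    split_ifs <;> subst_vars <;> linarith [hP.1 m]
  · simp [Finset.sum_sub_distrib, Finset.sum_add_distrib, hP.2]

lemma le_dopaObj_of_isMaxOn (hzero : ∀ m, ∫ t in (0 : ℝ)..1, quantile (F m) t = 0)
    {u P : Fin K → ℝ} (hmax : IsMaxOn (dopaObj F u) (simplex K) P) (k : Fin K) :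
    u k ≤ dopaObj F u P := by
  have hk : Pi.single k (1 : ℝ) ∈ simplex K :=
    ⟨fun m => by rw [Pi.single_apply]; split_ifs <;> norm_num, by simp⟩
  have hρ : ∀ m, ∫ t in (1 - (Pi.single k 1 : Fin K → ℝ) m)..1, quantile (F m) t = 0 := fun m => by
    rcases eq_or_ne m k with rfl | hmk
    · simpa using hzero m
    · simp [hmk]
  have hval : dopaObj F u (Pi.single k 1) ≤ dopaObj F u P := hmax hk
  rw [dopaObj, Finset.sum_eq_zero fun m _ => hρ m, add_zero] at hval
  simpa [Pi.single_apply] using hval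

lemma dopaObj_add_sum_le_of_isMaxOn {u w P P' : Fin K → ℝ} (hP : P ∈ simplex K)
    (hmax : IsMaxOn (dopaObj F w) (simplex K) P') :
    dopaObj F u P + ∑ m, (w m - u m) * P m ≤ dopaObj F w P' := by
  refine le_of_eq_of_le ?_ (hmax hP)
  simp only [dopaObj, sub_mul, Finset.sum_sub_distrib]
  ring

/-- Moving mass `ε` from arm `j` to arm `k` cannot increase the objective; the concavity of
`x ↦ ∫ t in (1 - x)..1, quantile (F m) t` turns this into an inequality between the marginal
values `u m + quantile (F m) (1 - P m)`, evaluated at the perturbed point, and `ε → 0`. -/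
lemma add_quantile_le_of_isMaxOn_s16 (hQmono : ∀ m, MonotoneOn (quantile (F m)) (Ioo 0 1))
    (hQcont : ∀ m, ContinuousOn (quantile (F m)) (Ioo 0 1))
    (hint : ∀ m, IntegrableOn (quantile (F m)) (Ioo 0 1)) {u P : Fin K → ℝ}
    (hP : P ∈ simplex K) (hpos : ∀ m, 0 < P m) (hmax : IsMaxOn (dopaObj F u) (simplex K) P)
    {k j : Fin K} (hkj : k ≠ j) :
    u k + quantile (F k) (1 - P k) ≤ u j + quantile (F j) (1 - P j) := by
  set g : Fin K → ℝ → ℝ := fun m x => u m * x + ∫ t in (1 - x)..1, quantile (F m) t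
  have hdopa : ∀ Q, dopaObj F u Q = ∑ m, g m (Q m) := fun Q => Finset.sum_add_distrib.symm
  have hg : ∀ m, ∀ x ∈ Ioo (0 : ℝ) 1, ∀ x' ∈ Ioo (0 : ℝ) 1,
      (x' - x) * (u m + quantile (F m) (1 - x')) ≤ g m x' - g m x := by
    intro m x hx x' hx'
    have := sub_mul_le_integral_sub_integral (hQmono m) (hint m) (x := 1 - x') (y := 1 - x)
      ⟨by linarith [hx'.2], by linarith [hx'.1]⟩ ⟨by linarith [hx.2], by linarith [hx.1]⟩
    simp only [g]
    linarith
  have hk1 := apply_lt_one_of_mem_simplex hP (hpos j) hkj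
  have hj1 := apply_lt_one_of_mem_simplex hP (hpos k) hkj.symm
  set φ : ℝ → ℝ := fun ε =>
    u k + quantile (F k) (1 - (P k + ε)) - (u j + quantile (F j) (1 - (P j - ε)))
  have hφ : ContinuousAt φ 0 := by
    have hQk := (hQcont k).continuousAt (isOpen_Ioo.mem_nhds (x := 1 - (P k + 0))
      ⟨by linarith, by linarith [hpos k]⟩)
    have hQj := (hQcont j).continuousAt (isOpen_Ioo.mem_nhds (x := 1 - (P j - 0))
      ⟨by linarith, by linarith [hpos j]⟩)
    exact ((hQk.comp (f := fun ε => 1 - (P k + ε)) (by fun_prop)).const_add _).sub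
      ((hQj.comp (f := fun ε => 1 - (P j - ε)) (by fun_prop)).const_add _)
  have hφ_nonpos : ∀ ε ∈ Ioo 0 (min (P j) (1 - P k)), φ ε ≤ 0 := by
    rintro ε ⟨hε, hεP⟩
    have hεj : ε < P j := hεP.trans_le (min_le_left _ _)
    have hεk : ε < 1 - P k := hεP.trans_le (min_le_right _ _)
    have hle : dopaObj F u (P + Pi.single k ε - Pi.single j ε) ≤ dopaObj F u P :=
      hmax (add_single_sub_single_mem_simplex hP k j hε.le hεj.le)
    rw [hdopa, hdopa, ← sub_nonpos, ← Finset.sum_sub_distrib,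
      Fintype.sum_eq_add k j hkj fun m hm => by simp [hm.1, hm.2]] at hle
    simp only [Pi.sub_apply, Pi.add_apply, Pi.single_eq_same, Pi.single_eq_of_ne hkj,
      Pi.single_eq_of_ne hkj.symm, add_zero, sub_zero] at hle
    have hk := hg k (P k) ⟨hpos k, hk1⟩ (P k + ε) ⟨by linarith [hpos k], by linarith⟩
    have hj := hg j (P j) ⟨hpos j, hj1⟩ (P j - ε) ⟨by linarith, by linarith⟩
    have : ε * φ ε ≤ 0 := by simp only [φ]; linarith
    exact nonpos_of_mul_nonpos_right this hε
  have := le_of_tendsto (hφ.tendsto.mono_left nhdsWithin_le_nhds)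
    (mem_of_superset (Ioo_mem_nhdsGT (lt_min (hpos j) (by linarith))) hφ_nonpos)
  simp only [φ, add_zero, sub_zero] at this
  linarith

lemma add_quantile_eq_of_isMaxOn (hQmono : ∀ m, MonotoneOn (quantile (F m)) (Ioo 0 1))
    (hQcont : ∀ m, ContinuousOn (quantile (F m)) (Ioo 0 1))
    (hint : ∀ m, IntegrableOn (quantile (F m)) (Ioo 0 1)) {u P : Fin K → ℝ}
    (hP : P ∈ simplex K) (hpos : ∀ m, 0 < P m) (hmax : IsMaxOn (dopaObj F u) (simplex K) P)
    (k j : Fin K) : u k + quantile (F k) (1 - P k) = u j + quantile (F j) (1 - P j) := by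
  rcases eq_or_ne k j with rfl | hkj
  · rfl
  exact (add_quantile_le_of_isMaxOn_s16 hQmono hQcont hint hP hpos hmax hkj).antisymm
    (add_quantile_le_of_isMaxOn_s16 hQmono hQcont hint hP hpos hmax hkj.symm)

/-- Comparison of the common levels `s`, `t` of the first-order conditions at two score
vectors. -/
lemma level_le_of_le {ι : Type*} [Fintype ι] [Nonempty ι] {Q : ι → ℝ → ℝ}
    (hQ : ∀ i, MonotoneOn (Q i) (Ioo 0 1)) {a b u v : ι → ℝ} {s t : ℝ}
    (ha : ∀ i, a i ∈ Ioo 0 1) (hb : ∀ i, b i ∈ Ioo 0 1) (hab : ∑ i, b i ≤ ∑ i, a i)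
    (hu : ∀ i, u i + Q i (a i) = s) (hv : ∀ i, v i + Q i (b i) = t) (hvu : v ≤ u) : t ≤ s := by
  obtain ⟨i, -, hi⟩ := Finset.exists_le_of_sum_le Finset.univ_nonempty hab
  linarith [hQ i (hb i) (ha i) hi, hu i, hv i, hvu i]

def IsDopaMap (F : Fin K → ℝ → ℝ) (p : (Fin K → ℝ) → Fin K → ℝ) : Prop :=
  ∀ u, p u ∈ simplex K ∧ (∀ k, 0 < p u k) ∧ IsMaxOn (dopaObj F u) (simplex K) (p u)

variable {p : (Fin K → ℝ) → Fin K → ℝ} {B γ : ℝ}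

lemma IsDopaMap.apply_eq_one_of_subsingleton (hp : IsDopaMap F p) (u : Fin K → ℝ) {k : Fin K}
    (hk : ∀ j, j = k) : p u k = 1 := by
  rw [← (hp u).1.2, Fintype.sum_eq_single k fun j hj => absurd (hk j) hj]

lemma IsDopaMap.apply_lt_one (hp : IsDopaMap F p) (u : Fin K → ℝ) {j k : Fin K} (hjk : j ≠ k)
    (m : Fin K) : p u m < 1 := by
  rcases eq_or_ne m k with rfl | hmk
  · exact apply_lt_one_of_mem_simplex (hp u).1 ((hp u).2.1 j) hjk.symm
  · exact apply_lt_one_of_mem_simplex (hp u).1 ((hp u).2.1 k) hmk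

/-- By the first-order conditions, `1 - p u k` and `1 - p (u + Pi.single k c) k` are values of
`F k` at two points at most `-c` apart, and the growth bound controls the increment of `F k`
over that gap. -/
lemma IsDopaMap.apply_add_single_ge (hp : IsDopaMap F p) (hmono : ∀ m, Monotone (F m))
    (hQmono : ∀ m, MonotoneOn (quantile (F m)) (Ioo 0 1))
    (hQcont : ∀ m, ContinuousOn (quantile (F m)) (Ioo 0 1))
    (hint : ∀ m, IntegrableOn (quantile (F m)) (Ioo 0 1))
    (hFQ : ∀ m, ∀ s ∈ Ioo (0 : ℝ) 1, F m (quantile (F m) s) = s)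
    (hincr : ∀ m x ε, 0 < F m x → 0 ≤ ε → F m (x + ε) - F m x ≤ ε * B * (1 - F m x) ^ γ)
    (hB : 0 ≤ B) (u : Fin K → ℝ) (k : Fin K) (c : ℝ) (hc : c ≤ 0) :
    p u k + c * B * p u k ^ γ ≤ p (u + Pi.single k c) k := by
  set v := u + Pi.single k c
  by_cases hK : ∀ j, j = k
  · rw [hp.apply_eq_one_of_subsingleton u hK, hp.apply_eq_one_of_subsingleton v hK,
      Real.one_rpow, mul_one]
    nlinarith
  obtain ⟨j, hjk⟩ := not_forall.1 hK
  have : Nonempty (Fin K) := ⟨k⟩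
  have hmem : ∀ w m, 1 - p w m ∈ Ioo (0 : ℝ) 1 :=
    fun w m => ⟨by linarith [hp.apply_lt_one w hjk m], by linarith [(hp w).2.1 m]⟩
  have hfoc : ∀ w m, w m + quantile (F m) (1 - p w m) = w k + quantile (F k) (1 - p w k) :=
    fun w m => add_quantile_eq_of_isMaxOn hQmono hQcont hint (hp w).1 (hp w).2.1 (hp w).2.2 m k
  have hlevel := level_le_of_le hQmono (hmem u) (hmem v)
    (by simp [Finset.sum_sub_distrib, (hp u).1.2, (hp v).1.2]) (hfoc u) (hfoc v)
    fun m => by simp only [v, Pi.add_apply, Pi.single_apply]; split_ifs <;> linarith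
  set x := quantile (F k) (1 - p u k)
  have hFx : F k x = 1 - p u k := hFQ k _ (hmem u k)
  have hFy : F k (quantile (F k) (1 - p v k)) = 1 - p v k := hFQ k _ (hmem v k)
  have hvk : v k = u k + c := by simp [v]
  have hy := hmono k (show quantile (F k) (1 - p v k) ≤ x + -c by linarith)
  have hxc := hincr k x (-c) (hFx ▸ (hmem u k).1) (neg_nonneg.2 hc)
  rw [hFx, sub_sub_cancel] at hxc
  rw [hFy] at hy
  linarith

lemma IsDopaMap.dopaObj_add_single_le (hp : IsDopaMap F p) {u : Fin K → ℝ} {k : Fin K}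
    (hdrop : ∀ c ≤ 0, p u k + c * B * p u k ^ γ ≤ p (u + Pi.single k c) k) {c : ℝ} (hc : c ≤ 0) :
    dopaObj F (u + Pi.single k c) (p (u + Pi.single k c)) ≤
      dopaObj F u (p u) + c * p u k + 1 / 2 * B * c ^ 2 * p u k ^ γ := by
  set w : ℝ → Fin K → ℝ := fun s => u + Pi.single k (s * c)
  have key := sub_le_of_forall_sub_le_mul (φ := fun s => dopaObj F (w s) (p (w s)))
    (A := c * p u k) (L := B * c ^ 2 * p u k ^ γ) fun s s' hs hss' _ => by
      -- `p` is a subgradient of the convex value function, and `hdrop` bounds `p (w s') k`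
      have hgrad := dopaObj_add_sum_le_of_isMaxOn (F := F) (u := w s') (w := w s)
        (hp (w s')).1 (hp (w s)).2.2
      have hsum : ∑ m, (w s m - w s' m) * p (w s') m = (s - s') * c * p (w s') k := by
        simp [w, Pi.single_apply, sub_mul]
      have hdrop' := mul_le_mul_of_nonpos_left (hdrop (s' * c) (by nlinarith))
        (show (s' - s) * c ≤ 0 by nlinarith)
      simp only [w] at hgrad hsum hdrop' ⊢
      nlinarith
  simp only [w, one_mul, zero_mul, Pi.single_zero, add_zero] at key
  linarith

lemma IsDopaMap.sum_mul_dopaObj_add_single_le (hp : IsDopaMap F p)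
    (hstab : ∀ u k, ∀ c ≤ 0, dopaObj F (u + Pi.single k c) (p (u + Pi.single k c)) ≤
      dopaObj F u (p u) + c * p u k + 1 / 2 * B * c ^ 2 * p u k ^ γ)
    (hB : 0 ≤ B) (hγ : γ ∈ Icc (1 : ℝ) 2) (w x : Fin K → ℝ) (hx : ∀ a, x a ∈ Icc (-1 : ℝ) 0) :
    ∑ a, p w a * dopaObj F (w + Pi.single a (x a / p w a)) (p (w + Pi.single a (x a / p w a))) ≤
      dopaObj F w (p w) + ∑ a, p w a * x a + 1 / 2 * B * (K : ℝ) ^ (2 - γ) := by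
  obtain ⟨hw, hpos, -⟩ := hp w
  have hterm : ∀ a, p w a * dopaObj F (w + Pi.single a (x a / p w a))
      (p (w + Pi.single a (x a / p w a))) ≤
        p w a * dopaObj F w (p w) + p w a * x a + 1 / 2 * B * p w a ^ (γ - 1) := by
    intro a
    have hpa := hpos a
    have h := mul_le_mul_of_nonneg_left
      (hstab w a _ (div_nonpos_of_nonpos_of_nonneg (hx a).2 hpa.le)) hpa.le
    have hx2 : x a ^ 2 ≤ 1 := by nlinarith [(hx a).1, (hx a).2]
    have hpow : p w a ^ γ = p w a * p w a ^ (γ - 1) := by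
      rw [Real.rpow_sub_one hpa.ne']; field_simp
    calc _ ≤ p w a * dopaObj F w (p w) + p w a * x a + 1 / 2 * B * x a ^ 2 * p w a ^ (γ - 1) := by
          refine h.trans_eq ?_
          rw [hpow]
          field_simp
      _ ≤ _ := by nlinarith [mul_nonneg hB (Real.rpow_nonneg hpa.le (γ - 1))]
  have hJ := sum_rpow_le_card_rpow (fun a => (hpos a).le) hw.2 (α := γ - 1)
    (by linarith [hγ.1]) (by linarith [hγ.2])
  rw [Fintype.card_fin, show 1 - (γ - 1) = 2 - γ by ring] at hJ
  calc _ ≤ ∑ a, (p w a * dopaObj F w (p w) + p w a * x a + 1 / 2 * B * p w a ^ (γ - 1)) :=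
        Finset.sum_le_sum fun a _ => hterm a
    _ = dopaObj F w (p w) + ∑ a, p w a * x a + 1 / 2 * B * ∑ a, p w a ^ (γ - 1) := by
        rw [Finset.sum_add_distrib, Finset.sum_add_distrib, ← Finset.sum_mul, hw.2, one_mul,
          Finset.mul_sum]
    _ ≤ _ := by gcongr

end Dopa

section Histories

variable {K : ℕ} (r : List (Fin K) → Fin K → ℝ) (p : (Fin K → ℝ) → Fin K → ℝ)

noncomputable def histExpect (t : ℕ) (g : List (Fin K) → ℝ) : ℝ :=
  ∑ f : Fin t → Fin K, histProb r p (List.ofFn f).reverse * g (List.ofFn f).reverse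

lemma uhat_cons (a : Fin K) (h : List (Fin K)) :
    uhat r p (a :: h) = uhat r p h + Pi.single a (r h a / p (uhat r p h) a) := by
  funext k
  simp [uhat, Pi.single_apply]

lemma histExpect_zero (g : List (Fin K) → ℝ) : histExpect r p 0 g = g [] := by
  simp [histExpect, histProb]

lemma histExpect_succ (t : ℕ) (g : List (Fin K) → ℝ) :
    histExpect r p (t + 1) g =
      histExpect r p t fun h => ∑ a, p (uhat r p h) a * g (a :: h) := by
  simp only [histExpect, Finset.mul_sum]
  rw [← (Fin.snocEquiv fun _ => Fin K).sum_comp, Fintype.sum_prod_type, Finset.sum_comm]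
  refine Finset.sum_congr rfl fun f _ => Finset.sum_congr rfl fun a _ => ?_
  have : List.ofFn (Fin.snocEquiv (fun _ => Fin K) (a, f)) = (List.ofFn f).concat a := by
    rw [List.ofFn_succ']
    simp [Fin.snocEquiv]
  rw [this, List.concat_eq_append, List.reverse_append, List.reverse_singleton,
    List.singleton_append, histProb, mul_assoc]

lemma histExpect_eq_of_forall_sum_eq {g : List (Fin K) → ℝ}
    (hg : ∀ h, ∑ a, p (uhat r p h) a * g (a :: h) = g h) (t : ℕ) : histExpect r p t g = g [] := by
  induction t with
  | zero => exact histExpect_zero r p g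
  | succ t ih => rw [histExpect_succ, funext hg, ih]

lemma histExpect_sub (t : ℕ) (g₁ g₂ : List (Fin K) → ℝ) :
    histExpect r p t (fun h => g₁ h - g₂ h) = histExpect r p t g₁ - histExpect r p t g₂ := by
  simp [histExpect, mul_sub, Finset.sum_sub_distrib]

lemma histExpect_add_const (hp1 : ∀ u, ∑ a, p u a = 1) (t : ℕ) (g : List (Fin K) → ℝ)
    (C : ℝ) : histExpect r p t (fun h => g h + C) = histExpect r p t g + C := by
  have h1 : histExpect r p t (fun _ => 1) = 1 :=
    histExpect_eq_of_forall_sum_eq r p (fun h => by simp [hp1]) t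
  simp only [histExpect, mul_add, Finset.sum_add_distrib, ← Finset.sum_mul] at h1 ⊢
  simp only [mul_one] at h1
  rw [h1, one_mul]

lemma histExpect_mono (hp0 : ∀ u a, 0 ≤ p u a) (t : ℕ) {g₁ g₂ : List (Fin K) → ℝ}
    (hg : ∀ h, g₁ h ≤ g₂ h) : histExpect r p t g₁ ≤ histExpect r p t g₂ := by
  have hprob : ∀ h, 0 ≤ histProb r p h := fun h => by
    induction h with
    | nil => simp [histProb]
    | cons a h ih => exact mul_nonneg ih (hp0 _ _)
  exact Finset.sum_le_sum fun f _ => mul_le_mul_of_nonneg_left (hg _) (hprob _)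

lemma histExpect_le_of_forall_sum_le (hp0 : ∀ u a, 0 ≤ p u a) (hp1 : ∀ u, ∑ a, p u a = 1)
    {g : List (Fin K) → ℝ} {C : ℝ} (hg : ∀ h, ∑ a, p (uhat r p h) a * g (a :: h) ≤ g h + C)
    (t : ℕ) : histExpect r p t g ≤ g [] + t * C := by
  induction t with
  | zero => simp [histExpect_zero]
  | succ t ih =>
    rw [histExpect_succ]
    calc _ ≤ histExpect r p t (fun h => g h + C) := histExpect_mono r p hp0 t hg
      _ ≤ g [] + (t + 1 : ℕ) * C := by
        rw [histExpect_add_const r p hp1]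
        push_cast
        linarith

lemma histExpect_uhat (hp : ∀ u a, 0 < p u a) (hp1 : ∀ u, ∑ a, p u a = 1) (t : ℕ) (k : Fin K) :
    histExpect r p t (fun h => uhat r p h k) = histExpect r p t (cumArm r k) := by
  rw [← sub_eq_zero, ← histExpect_sub, histExpect_eq_of_forall_sum_eq r p _ t]
  · simp [uhat, cumArm]
  intro h
  simp only [uhat_cons, cumArm, Pi.add_apply, Pi.single_apply, mul_sub, mul_add,
    Finset.sum_sub_distrib, Finset.sum_add_distrib, ← Finset.sum_mul, hp1, one_mul, mul_ite,
    mul_zero, Finset.sum_ite_eq, Finset.mem_univ, if_true]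
  rw [mul_div_cancel₀ _ (hp _ k).ne']
  ring

end Histories

/-- Potential argument with `Φ u = dopaObj F u (p u)`: `Φ (uhat h) - cumReward r h` is a
supermartingale up to the drift `C`, and `Φ` dominates every coordinate. -/
lemma IsDopaMap.regret_le {K : ℕ} [Nonempty (Fin K)] {F : Fin K → ℝ → ℝ}
    {p : (Fin K → ℝ) → Fin K → ℝ} (hp : IsDopaMap F p)
    (hzero : ∀ m, ∫ t in (0 : ℝ)..1, quantile (F m) t = 0) {C : ℝ}
    (hround : ∀ w x : Fin K → ℝ, (∀ a, x a ∈ Icc (-1 : ℝ) 0) →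
      ∑ a, p w a * dopaObj F (w + Pi.single a (x a / p w a)) (p (w + Pi.single a (x a / p w a)))
        ≤ dopaObj F w (p w) + ∑ a, p w a * x a + C)
    (T : ℕ) (r : List (Fin K) → Fin K → ℝ) (hr : ∀ h k, r h k ∈ Icc (-1 : ℝ) 0) :
    regret K T r p ≤ dopaObj F 0 (p 0) + T * C := by
  have hp0 u a : 0 ≤ p u a := ((hp u).2.1 a).le
  have hp1 u : ∑ a, p u a = 1 := (hp u).1.2
  set Φ : List (Fin K) → ℝ := fun h => dopaObj F (uhat r p h) (p (uhat r p h))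
  have hpot := histExpect_le_of_forall_sum_le r p hp0 hp1 (g := fun h => Φ h - cumReward r h)
    (fun h => by
      simp only [Φ, uhat_cons, cumReward, mul_sub, mul_add, Finset.sum_sub_distrib,
        Finset.sum_add_distrib, ← Finset.sum_mul, hp1, one_mul]
      exact (sub_le_sub_right (hround (uhat r p h) (r h) (hr h)) _).trans_eq (by ring)) T
  have harm k : histExpect r p T (cumArm r k) ≤ histExpect r p T Φ := by
    rw [← histExpect_uhat r p (fun u a => (hp u).2.1 a) hp1]
    exact histExpect_mono r p hp0 T fun h => le_dopaObj_of_isMaxOn hzero (hp _).2.2 k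
  calc regret K T r p
      = (⨆ k, histExpect r p T (cumArm r k)) - histExpect r p T (cumReward r) := rfl
    _ ≤ histExpect r p T Φ - histExpect r p T (cumReward r) := by gcongr; exact ciSup_le harm
    _ = histExpect r p T (fun h => Φ h - cumReward r h) := (histExpect_sub r p T _ _).symm
    _ ≤ dopaObj F 0 (p 0) + T * C := by
        have h0 : uhat r p [] = 0 := rfl
        simpa [Φ, h0, cumReward] using hpot

theorem stmt16_general (K : ℕ) (hK : 1 ≤ K) (F F' : Fin K → ℝ → ℝ)
    (hmono : ∀ k, Monotone (F k))
    (hderiv : ∀ k s, HasDerivAt (F k) (F' k s) s)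
    (h01 : ∀ k s, F k s ∈ Ico (0:ℝ) 1)
    (hbot : ∀ k, Tendsto (F k) atBot (nhds 0))
    (htop : ∀ k, Tendsto (F k) atTop (nhds 1))
    (hstrict : ∀ k, StrictMonoOn (F k) {s | F k s ∈ Ioo (0:ℝ) 1})
    (hint : ∀ k, IntegrableOn (quantile (F k)) (Ioo (0:ℝ) 1))
    (hzero : ∀ k, ∫ t in (0:ℝ)..1, quantile (F k) t = 0)
    (γ B : ℝ) (hγ : γ ∈ Ioo (1:ℝ) 2) (hB : 0 < B)
    (hgrowth : ∀ k, ∀ q ∈ Ioo (0:ℝ) 1, F' k (quantile (F k) (1 - q)) ≤ B * q ^ γ)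
    (p : (Fin K → ℝ) → (Fin K → ℝ))
    (hp : ∀ u, p u ∈ simplex K ∧ (∀ k, 0 < p u k) ∧
      IsMaxOn (dopaObj F u) (simplex K) (p u) ∧
      ∀ q ∈ simplex K, IsMaxOn (dopaObj F u) (simplex K) q → q = p u)
    (T : ℕ)
    (r : List (Fin K) → Fin K → ℝ) (hr : ∀ h k, r h k ∈ Icc (-1:ℝ) 0) :
    regret K T r p ≤
      (∑ k, ∫ t in (1 - p 0 k)..1, quantile (F k) t) +
        (1 / 2) * B * T * (K : ℝ) ^ ((2:ℝ) - γ) := by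
  have hcont k : Continuous (F k) :=
    Differentiable.continuous fun s => (hderiv k s).differentiableAt
  have hdopa : IsDopaMap F p := fun u => ⟨(hp u).1, (hp u).2.1, (hp u).2.2.1⟩
  have hdrop := hdopa.apply_add_single_ge hmono
    (fun k => monotoneOn_quantile (hmono k) (hbot k) (htop k))
    (fun k => continuousOn_quantile (hmono k) (hcont k) (hbot k) (htop k) (hstrict k)) hint
    (fun k _ hs => apply_quantile (hmono k) (hcont k) (hbot k) (htop k) hs)
    (fun k _ _ hx hε => apply_add_sub_apply_le (hmono k) (hderiv k) (fun s => (h01 k s).2)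
      (fun _ => le_mul_one_sub_rpow_of_quantile (hmono k) (hbot k) (hstrict k) (hgrowth k))
      hB.le (by linarith [hγ.1]) hx hε) hB.le
  have hround := hdopa.sum_mul_dopaObj_add_single_le
    (fun u k _ hc => hdopa.dopaObj_add_single_le (hdrop u k) hc) hB.le ⟨hγ.1.le, hγ.2.le⟩
  have : Nonempty (Fin K) := ⟨⟨0, hK⟩⟩
  calc regret K T r p ≤ dopaObj F 0 (p 0) + T * (1 / 2 * B * (K : ℝ) ^ (2 - γ)) :=
        hdopa.regret_le hzero hround T r hr
    _ = _ := by simp only [dopaObj, Pi.zero_apply, zero_mul, Finset.sum_const_zero]; ring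

theorem stmt16 (K : ℕ) (hK : 1 ≤ K) (F F' : Fin K → ℝ → ℝ)
    (hmono : ∀ k, Monotone (F k))
    (hderiv : ∀ k s, HasDerivAt (F k) (F' k s) s)
    (h01 : ∀ k s, F k s ∈ Ico (0:ℝ) 1)
    (hbot : ∀ k, Tendsto (F k) atBot (nhds 0))
    (htop : ∀ k, Tendsto (F k) atTop (nhds 1))
    (hstrict : ∀ k, StrictMonoOn (F k) {s | F k s ∈ Ioo (0:ℝ) 1})
    (hint : ∀ k, IntegrableOn (quantile (F k)) (Ioo (0:ℝ) 1))
    (hzero : ∀ k, ∫ t in (0:ℝ)..1, quantile (F k) t = 0)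
    (γ B : ℝ) (hγ : γ ∈ Ioo (1:ℝ) 2) (hB : 0 < B)
    (hgrowth : ∀ k, ∀ q ∈ Ioo (0:ℝ) 1, F' k (quantile (F k) (1 - q)) ≤ B * q ^ γ)
    (p : (Fin K → ℝ) → (Fin K → ℝ))
    (hp : ∀ u, p u ∈ simplex K ∧ (∀ k, 0 < p u k) ∧
      IsMaxOn (dopaObj F u) (simplex K) (p u) ∧
      ∀ q ∈ simplex K, IsMaxOn (dopaObj F u) (simplex K) q → q = p u)
    (T : ℕ) (hT : 1 ≤ T)
    (r : List (Fin K) → Fin K → ℝ) (hr : ∀ h k, r h k ∈ Icc (-1:ℝ) 0) :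
    regret K T r p ≤
      (∑ k, ∫ t in (1 - p 0 k)..1, quantile (F k) t) +
        (1 / 2) * B * T * (K : ℝ) ^ ((2:ℝ) - γ) :=
  stmt16_general K hK F F' hmono hderiv h01 hbot htop hstrict hint hzero γ B hγ hB hgrowth p hp T r
    hr
end
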